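/- The real numbers ℝ, with their usual strict order, addition, zero, multiplication and one, form a streak, and ℝ is a terminal streak: for every streak X there exists exactly one prestreak morphism f : X → ℝ (a map preserving <, +, 0, 1, and products of positive elements). -/

import Mathlib

/-- A prestreak: a strict order (asymmetric and cotransitive) together with a
commutative additive monoid structure and a commutative multiplicative monoid
structure on the positive part, compatible with the order.  (The intrinsic
topology conditions of the paper are omitted, being vacuous in the classical
set-theoretic setting.) -/
structure Prestreak (X : Type*) where
  lt : X → X → Prop
  add : X → X → X
  zero : X
  mul : X → X → X
  one : X
  lt_asymm : ∀ a b, ¬ (lt a b ∧ lt b a)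
  lt_cotrans : ∀ a b x, lt a b → lt a x ∨ lt x b
  add_comm : ∀ a b, add a b = add b a
  add_assoc : ∀ a b c, add (add a b) c = add a (add b c)
  add_zero : ∀ a, add a zero = a
  zero_lt_one : lt zero one
  mul_pos : ∀ a b, lt zero a → lt zero b → lt zero (mul a b)
  mul_comm : ∀ a b, lt zero a → lt zero b → mul a b = mul b a
  mul_assoc : ∀ a b c, lt zero a → lt zero b → lt zero c →
    mul (mul a b) c = mul a (mul b c)
  mul_one : ∀ a, lt zero a → mul a one = a
  mul_add : ∀ a b c, lt zero a → lt zero b → lt zero c →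
    mul (add a b) c = add (mul a c) (mul b c)
  add_lt_add_iff : ∀ a b x, (lt (add a x) (add b x) ↔ lt a b)
  mul_lt_mul_iff : ∀ a b x, lt zero a → lt zero b → lt zero x →
    (lt (mul a x) (mul b x) ↔ lt a b)

namespace Prestreak

variable {X : Type*}

/-- Multiplication by a natural number: `0·a = 0`, `(n+1)·a = n·a + a`. -/
def nsmul (P : Prestreak X) : ℕ → X → X
  | 0, _ => P.zero
  | n + 1, a => P.add (nsmul P n a) a

/-- The canonical image of a natural number, `n ↦ n·1`. -/
def ofNat (P : Prestreak X) (n : ℕ) : X := P.nsmul n P.one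

/-- Comparison `x < q` of an element of a prestreak with a rational number,
using the canonical representation `q = (q.num⁺ − q.num⁻)/q.den`:
`x < (a−b)/c  :=  c·x + b < a`. -/
def ltQ (P : Prestreak X) (x : X) (q : ℚ) : Prop :=
  P.lt (P.add (P.nsmul q.den x) (P.ofNat ((-q.num).toNat))) (P.ofNat q.num.toNat)

/-- Comparison `q < x` of a rational with an element of a prestreak:
`(a−b)/c < x  :=  a < c·x + b`. -/
def qLt (P : Prestreak X) (q : ℚ) (x : X) : Prop :=
  P.lt (P.ofNat q.num.toNat) (P.add (P.nsmul q.den x) (P.ofNat ((-q.num).toNat)))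

/-- The archimedean property for prestreaks. -/
def Archimedean (P : Prestreak X) : Prop :=
  ∀ a b c d : X, P.lt b d →
    ∃ n : ℕ, P.lt (P.add a (P.nsmul n b)) (P.add c (P.nsmul n d))

/-- Tightness: antisymmetry of `≤` (where `a ≤ b := ¬ b < a`).
A streak is a tight archimedean prestreak. -/
def Tight (P : Prestreak X) : Prop :=
  ∀ a b : X, ¬ P.lt a b → ¬ P.lt b a → a = b

/-- The apartness relation `a # b := a < b ∨ b < a`. -/
def Apart (P : Prestreak X) (a b : X) : Prop := P.lt a b ∨ P.lt b a

/-- A morphism of prestreaks: preserves `<`, `+`, `0`, `1` and products of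
positive elements. -/
def IsHom {Y : Type*} (P : Prestreak X) (Q : Prestreak Y) (f : X → Y) : Prop :=
  (∀ a b, P.lt a b → Q.lt (f a) (f b)) ∧
  (∀ a b, f (P.add a b) = Q.add (f a) (f b)) ∧
  f P.zero = Q.zero ∧ f P.one = Q.one ∧
  (∀ a b, P.lt P.zero a → P.lt P.zero b → f (P.mul a b) = Q.mul (f a) (f b))

/-- A multiplicative structure on a prestreak: a total multiplication which is
commutative, associative, distributes over addition, has unit `1`, restricts to
the given multiplication on positive elements, and satisfies the multiplicity
condition. -/
def IsMultiplicative (P : Prestreak X) (tmul : X → X → X) : Prop :=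
  (∀ a b, tmul a b = tmul b a) ∧
  (∀ a b c, tmul (tmul a b) c = tmul a (tmul b c)) ∧
  (∀ a b c, tmul (P.add a b) c = P.add (tmul a c) (tmul b c)) ∧
  (∀ a, tmul a P.one = a) ∧
  (∀ a b, P.lt P.zero a → P.lt P.zero b → tmul a b = P.mul a b) ∧
  (∀ a b c d, P.lt b a → P.lt d c →
    P.lt (P.add (tmul a d) (tmul b c)) (P.add (tmul a c) (tmul b d)))

end Prestreak

universe u

/-- The real numbers with their usual strict order, addition, zero,
multiplication and one form a prestreak. -/
noncomputable def realPrestreak : Prestreak ℝ where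
  lt := (· < ·)
  add := (· + ·)
  zero := 0
  mul := (· * ·)
  one := 1
  lt_asymm := fun a b h => lt_asymm h.1 h.2
  lt_cotrans := fun a b x h =>
    (lt_or_ge a x).imp id fun hxa => lt_of_le_of_lt hxa h
  add_comm := fun a b => _root_.add_comm a b
  add_assoc := fun a b c => _root_.add_assoc a b c
  add_zero := fun a => _root_.add_zero a
  zero_lt_one := one_pos
  mul_pos := fun a b ha hb => _root_.mul_pos ha hb
  mul_comm := fun a b _ _ => _root_.mul_comm a b
  mul_assoc := fun a b c _ _ _ => _root_.mul_assoc a b c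
  mul_one := fun a _ => _root_.mul_one a
  mul_add := fun a b c _ _ _ => _root_.add_mul a b c
  add_lt_add_iff := fun a b x => add_lt_add_iff_right x
  mul_lt_mul_iff := fun a b x _ _ hx => mul_lt_mul_iff_of_pos_right hx

/-!
An element `x` of an archimedean prestreak is sent to the supremum of the rationals below it,
a comparison of `x` with `(a - b) / n` being read as `a < n·x + b` or `n·x + b < a`. The
archimedean property bounds this cut and cotransitivity makes it located (`q < q'` forces
`q < x` or `x < q'`), so `toReal x ≤ r` iff every rational below `x` is at most `r`, and
`r ≤ toReal x` iff every rational above `x` is at least `r`. With these two criteria additivity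
comes from adding cuts, strict monotonicity from the archimedean property, and multiplicativity
from `a < n·x → a·y < n·(x·y)`. A morphism `f` into `ℝ` places `f x` in the same cut, so
`f = toReal`.
-/

namespace Rat

lemma cast_eq_toNat_sub_div {K : Type*} [DivisionRing K] (q : ℚ) :
    (q : K) = ((q.num.toNat : K) - (-q.num).toNat) / q.den := by
  have h := congrArg (Int.cast (R := K)) (Int.toNat_sub_toNat_neg q.num)
  push_cast at h
  rw [Rat.cast_def, h]

lemma eq_toNat_sub_div (q : ℚ) : q = ((q.num.toNat : ℚ) - (-q.num).toNat) / q.den := by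
  simpa using cast_eq_toNat_sub_div (K := ℚ) q

lemma exists_eq_sub_div_sub_div (q q' : ℚ) :
    ∃ a b a' b' n : ℕ, 0 < n ∧ q = ((a : ℚ) - b) / n ∧ q' = ((a' : ℚ) - b') / n := by
  refine ⟨q'.den * q.num.toNat, q'.den * (-q.num).toNat, q.den * q'.num.toNat,
    q.den * (-q'.num).toNat, q.den * q'.den, by positivity, ?_, ?_⟩
  · refine (eq_toNat_sub_div q).trans ?_
    push_cast
    field_simp
  · refine (eq_toNat_sub_div q').trans ?_
    push_cast
    field_simp

lemma exists_eq_div_of_pos {q : ℚ} (hq : 0 < q) :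
    ∃ a n : ℕ, 0 < a ∧ 0 < n ∧ q = a / n := by
  have hnum := Rat.num_pos.2 hq
  have hneg : (-q.num).toNat = 0 := by omega
  refine ⟨q.num.toNat, q.den, by omega, q.den_pos, ?_⟩
  simpa [hneg] using eq_toNat_sub_div q

end Rat

namespace Prestreak

variable {X : Type*} (P : Prestreak X)

lemma lt_irrefl (a : X) : ¬ P.lt a a := fun h => P.lt_asymm a a ⟨h, h⟩

lemma not_lt_of_lt {a b : X} (h : P.lt a b) : ¬ P.lt b a := fun h' => P.lt_asymm a b ⟨h, h'⟩

lemma lt_trans {a b c : X} (hab : P.lt a b) (hbc : P.lt b c) : P.lt a c :=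
  (P.lt_cotrans a b c hab).resolve_right (P.not_lt_of_lt hbc)

lemma zero_add (a : X) : P.add P.zero a = a := by
  rw [P.add_comm]
  exact P.add_zero a

lemma add_right_comm (a b c : X) : P.add (P.add a b) c = P.add (P.add a c) b := by
  rw [P.add_assoc, P.add_comm b c, ← P.add_assoc]

lemma add_add_add_comm (a b c d : X) :
    P.add (P.add a b) (P.add c d) = P.add (P.add a c) (P.add b d) := by
  rw [P.add_assoc, ← P.add_assoc b, P.add_comm b c, P.add_assoc c, ← P.add_assoc]

lemma add_lt_add_iff_left (x a b : X) : P.lt (P.add x a) (P.add x b) ↔ P.lt a b := by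
  rw [P.add_comm x a, P.add_comm x b]
  exact P.add_lt_add_iff a b x

lemma add_le_add {a b c d : X} (hab : ¬ P.lt b a) (hcd : ¬ P.lt d c) :
    ¬ P.lt (P.add b d) (P.add a c) := fun h =>
  (P.lt_cotrans _ _ (P.add a d) h).elim (fun h => hab ((P.add_lt_add_iff b a d).1 h))
    fun h => hcd ((P.add_lt_add_iff_left a d c).1 h)

lemma add_lt_add_of_le_of_lt {a b c d : X} (hab : ¬ P.lt b a) (hcd : P.lt c d) :
    P.lt (P.add a c) (P.add b d) :=
  (P.lt_cotrans _ _ (P.add b d) ((P.add_lt_add_iff_left a c d).2 hcd)).resolve_right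
    fun h => hab ((P.add_lt_add_iff b a d).1 h)

lemma add_lt_add {a b c d : X} (hab : P.lt a b) (hcd : P.lt c d) :
    P.lt (P.add a c) (P.add b d) :=
  P.add_lt_add_of_le_of_lt (P.not_lt_of_lt hab) hcd

lemma nsmul_succ (n : ℕ) (x : X) : P.nsmul (n + 1) x = P.add (P.nsmul n x) x := rfl

lemma one_nsmul (x : X) : P.nsmul 1 x = x := P.zero_add x

lemma nsmul_zero (n : ℕ) : P.nsmul n P.zero = P.zero := by
  induction n with
  | zero => rfl
  | succ n ih => rw [P.nsmul_succ, ih, P.add_zero]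

lemma nsmul_add (n : ℕ) (x y : X) :
    P.nsmul n (P.add x y) = P.add (P.nsmul n x) (P.nsmul n y) := by
  induction n with
  | zero => exact (P.add_zero P.zero).symm
  | succ n ih => rw [P.nsmul_succ, P.nsmul_succ, P.nsmul_succ, ih, P.add_add_add_comm]

lemma add_nsmul (m n : ℕ) (x : X) :
    P.nsmul (m + n) x = P.add (P.nsmul m x) (P.nsmul n x) := by
  induction n with
  | zero => exact (P.add_zero _).symm
  | succ n ih => rw [← Nat.add_assoc, P.nsmul_succ, P.nsmul_succ, ih, P.add_assoc]

lemma mul_nsmul (m n : ℕ) (x : X) : P.nsmul (m * n) x = P.nsmul m (P.nsmul n x) := by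
  induction m with
  | zero => rw [Nat.zero_mul]; rfl
  | succ m ih => rw [Nat.succ_mul, P.add_nsmul, ih, P.nsmul_succ]

lemma nsmul_le_nsmul {a b : X} (h : ¬ P.lt b a) (n : ℕ) :
    ¬ P.lt (P.nsmul n b) (P.nsmul n a) := by
  induction n with
  | zero => exact P.lt_irrefl _
  | succ n ih => exact P.add_le_add ih h

lemma nsmul_lt_nsmul {a b : X} (h : P.lt a b) {n : ℕ} (hn : 0 < n) :
    P.lt (P.nsmul n a) (P.nsmul n b) := by
  obtain ⟨n, rfl⟩ := Nat.exists_eq_add_one_of_ne_zero hn.ne'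
  exact P.add_lt_add_of_le_of_lt (P.nsmul_le_nsmul (P.not_lt_of_lt h) n) h

lemma nsmul_lt_nsmul_iff {a b : X} {n : ℕ} (hn : 0 < n) :
    P.lt (P.nsmul n a) (P.nsmul n b) ↔ P.lt a b :=
  ⟨fun h => by_contra fun h' => P.nsmul_le_nsmul h' n h, fun h => P.nsmul_lt_nsmul h hn⟩

lemma nsmul_pos {x : X} (hx : P.lt P.zero x) {n : ℕ} (hn : 0 < n) :
    P.lt P.zero (P.nsmul n x) := by
  simpa only [P.nsmul_zero] using P.nsmul_lt_nsmul hx hn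

lemma ofNat_zero : P.ofNat 0 = P.zero := rfl

lemma nsmul_one (n : ℕ) : P.nsmul n P.one = P.ofNat n := rfl

lemma ofNat_add (m n : ℕ) : P.ofNat (m + n) = P.add (P.ofNat m) (P.ofNat n) :=
  P.add_nsmul m n P.one

lemma nsmul_ofNat (k m : ℕ) : P.nsmul k (P.ofNat m) = P.ofNat (k * m) :=
  (P.mul_nsmul k m P.one).symm

lemma ofNat_pos {n : ℕ} (hn : 0 < n) : P.lt P.zero (P.ofNat n) :=
  P.nsmul_pos P.zero_lt_one hn

lemma ofNat_lt_ofNat_iff {m n : ℕ} : P.lt (P.ofNat m) (P.ofNat n) ↔ m < n := by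
  constructor
  · intro h
    by_contra! hnm
    obtain ⟨k, rfl⟩ := Nat.exists_eq_add_of_le hnm
    rw [P.ofNat_add, ← P.add_zero (P.ofNat n), P.add_assoc, P.zero_add,
      P.add_lt_add_iff_left] at h
    exact P.nsmul_le_nsmul (P.not_lt_of_lt P.zero_lt_one) k (by rwa [P.nsmul_zero])
  · intro h
    obtain ⟨k, rfl⟩ := Nat.exists_eq_add_of_lt h
    rw [Nat.add_assoc, P.ofNat_add]
    conv_lhs => rw [← P.add_zero (P.ofNat m)]
    exact (P.add_lt_add_iff_left _ _ _).2 (P.ofNat_pos k.succ_pos)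

lemma nsmul_mul {x y : X} (hx : P.lt P.zero x) (hy : P.lt P.zero y) {n : ℕ} (hn : 0 < n) :
    P.mul (P.nsmul n x) y = P.nsmul n (P.mul x y) := by
  induction n, hn using Nat.le_induction with
  | base => rw [P.one_nsmul, P.one_nsmul]
  | succ n hn ih =>
    rw [P.nsmul_succ, P.nsmul_succ, P.mul_add _ _ _ (P.nsmul_pos hx hn) hx hy, ih]

lemma ofNat_mul {y : X} (hy : P.lt P.zero y) {m : ℕ} (hm : 0 < m) :
    P.mul (P.ofNat m) y = P.nsmul m y := by
  rw [← P.nsmul_one, P.nsmul_mul P.zero_lt_one hy hm, P.mul_comm _ _ P.zero_lt_one hy,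
    P.mul_one y hy]

lemma nsmul_lt_nsmul_mul {x y : X} (hx : P.lt P.zero x) (hy : P.lt P.zero y) {m n : ℕ}
    (hm : 0 < m) (hn : 0 < n) (h : P.lt (P.ofNat m) (P.nsmul n x)) :
    P.lt (P.nsmul m y) (P.nsmul n (P.mul x y)) := by
  have := (P.mul_lt_mul_iff _ _ y (P.ofNat_pos hm) (P.nsmul_pos hx hn) hy).2 h
  rwa [P.ofNat_mul hy hm, P.nsmul_mul hx hy hn] at this

lemma nsmul_mul_lt_nsmul {x y : X} (hx : P.lt P.zero x) (hy : P.lt P.zero y) {m n : ℕ}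
    (hm : 0 < m) (hn : 0 < n) (h : P.lt (P.nsmul n x) (P.ofNat m)) :
    P.lt (P.nsmul n (P.mul x y)) (P.nsmul m y) := by
  have := (P.mul_lt_mul_iff _ _ y (P.nsmul_pos hx hn) (P.ofNat_pos hm) hy).2 h
  rwa [P.ofNat_mul hy hm, P.nsmul_mul hx hy hn] at this

/-- `(a - b) / n < x`, as in `qLt` but for an arbitrary representation of the fraction. -/
def fracLt (a b n : ℕ) (x : X) : Prop := P.lt (P.ofNat a) (P.add (P.nsmul n x) (P.ofNat b))

/-- `x < (a - b) / n`, as in `ltQ` but for an arbitrary representation of the fraction. -/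
def ltFrac (x : X) (a b n : ℕ) : Prop := P.lt (P.add (P.nsmul n x) (P.ofNat b)) (P.ofNat a)

lemma nat_eq_of_div_eq {a b n a' b' n' : ℕ} (hn : 0 < n) (hn' : 0 < n')
    (h : ((a : ℚ) - b) / n = ((a' : ℚ) - b') / n') :
    n' * a + n * b' = n * a' + n' * b := by
  rw [div_eq_div_iff (by positivity) (by positivity)] at h
  have : ((n' * a + n * b' : ℕ) : ℚ) = ((n * a' + n' * b : ℕ) : ℚ) := by
    push_cast
    linear_combination h
  exact_mod_cast this

lemma fracLt_scale {a b n k : ℕ} (c : ℕ) (hk : 0 < k) {x : X} :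
    P.fracLt (k * a + c) (k * b + c) (k * n) x ↔ P.fracLt a b n x := by
  rw [fracLt, fracLt, P.ofNat_add, P.ofNat_add, ← P.add_assoc, P.add_lt_add_iff,
    ← P.nsmul_ofNat, ← P.nsmul_ofNat, P.mul_nsmul, ← P.nsmul_add, P.nsmul_lt_nsmul_iff hk]

lemma ltFrac_scale {a b n k : ℕ} (c : ℕ) (hk : 0 < k) {x : X} :
    P.ltFrac x (k * a + c) (k * b + c) (k * n) ↔ P.ltFrac x a b n := by
  rw [ltFrac, ltFrac, P.ofNat_add, P.ofNat_add, ← P.add_assoc, P.add_lt_add_iff,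
    ← P.nsmul_ofNat, ← P.nsmul_ofNat, P.mul_nsmul, ← P.nsmul_add, P.nsmul_lt_nsmul_iff hk]

lemma fracLt_congr {a b n a' b' n' : ℕ} (hn : 0 < n) (hn' : 0 < n') {x : X}
    (h : ((a : ℚ) - b) / n = ((a' : ℚ) - b') / n') :
    P.fracLt a b n x ↔ P.fracLt a' b' n' x := by
  rw [← P.fracLt_scale (n * b') hn', ← P.fracLt_scale (a := a') (n' * b) hn,
    nat_eq_of_div_eq hn hn' h, Nat.add_comm (n' * b), Nat.mul_comm n' n]

lemma ltFrac_congr {a b n a' b' n' : ℕ} (hn : 0 < n) (hn' : 0 < n') {x : X}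
    (h : ((a : ℚ) - b) / n = ((a' : ℚ) - b') / n') :
    P.ltFrac x a b n ↔ P.ltFrac x a' b' n' := by
  rw [← P.ltFrac_scale (n * b') hn', ← P.ltFrac_scale (a := a') (n' * b) hn,
    nat_eq_of_div_eq hn hn' h, Nat.add_comm (n' * b), Nat.mul_comm n' n]

lemma qLt_iff_fracLt {q : ℚ} {a b n : ℕ} (hn : 0 < n) (hq : q = ((a : ℚ) - b) / n) {x : X} :
    P.qLt q x ↔ P.fracLt a b n x :=
  P.fracLt_congr q.den_pos hn ((Rat.eq_toNat_sub_div q).symm.trans hq)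

lemma ltQ_iff_ltFrac {q : ℚ} {a b n : ℕ} (hn : 0 < n) (hq : q = ((a : ℚ) - b) / n) {x : X} :
    P.ltQ x q ↔ P.ltFrac x a b n :=
  P.ltFrac_congr q.den_pos hn ((Rat.eq_toNat_sub_div q).symm.trans hq)

lemma fracLt_add {a b c d n : ℕ} {x y : X} (hx : P.fracLt a b n x) (hy : P.fracLt c d n y) :
    P.fracLt (a + c) (b + d) n (P.add x y) := by
  rw [fracLt, P.ofNat_add, P.ofNat_add, P.nsmul_add, P.add_add_add_comm]
  exact P.add_lt_add hx hy

lemma ltFrac_add {a b c d n : ℕ} {x y : X} (hx : P.ltFrac x a b n) (hy : P.ltFrac y c d n) :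
    P.ltFrac (P.add x y) (a + c) (b + d) n := by
  rw [ltFrac, P.ofNat_add, P.ofNat_add, P.nsmul_add, P.add_add_add_comm]
  exact P.add_lt_add hx hy

lemma lt_of_fracLt_of_ltFrac {a b c d n : ℕ} {x : X} (h₁ : P.fracLt a b n x)
    (h₂ : P.ltFrac x c d n) : a + d < c + b := by
  rw [← P.ofNat_lt_ofNat_iff, P.ofNat_add, P.ofNat_add]
  refine P.lt_trans ((P.add_lt_add_iff _ _ _).2 h₁) ?_
  rw [P.add_right_comm]
  exact (P.add_lt_add_iff _ _ _).2 h₂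

lemma fracLt_or_ltFrac {a b c d n : ℕ} (h : a + d < c + b) (x : X) :
    P.fracLt a b n x ∨ P.ltFrac x c d n := by
  rw [← P.ofNat_lt_ofNat_iff, P.ofNat_add, P.ofNat_add] at h
  refine (P.lt_cotrans _ _ (P.add (P.add (P.nsmul n x) (P.ofNat b)) (P.ofNat d)) h).imp
    (P.add_lt_add_iff _ _ _).1 fun h => ?_
  rw [P.add_right_comm] at h
  exact (P.add_lt_add_iff _ _ _).1 h

lemma qLt_add {q q' : ℚ} {x y : X} (hx : P.qLt q x) (hy : P.qLt q' y) :
    P.qLt (q + q') (P.add x y) := by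
  obtain ⟨a, b, c, d, n, hn, rfl, rfl⟩ := Rat.exists_eq_sub_div_sub_div q q'
  rw [P.qLt_iff_fracLt hn rfl] at hx hy
  rw [P.qLt_iff_fracLt (a := a + c) (b := b + d) hn (by push_cast; ring)]
  exact P.fracLt_add hx hy

lemma ltQ_add {q q' : ℚ} {x y : X} (hx : P.ltQ x q) (hy : P.ltQ y q') :
    P.ltQ (P.add x y) (q + q') := by
  obtain ⟨a, b, c, d, n, hn, rfl, rfl⟩ := Rat.exists_eq_sub_div_sub_div q q'
  rw [P.ltQ_iff_ltFrac hn rfl] at hx hy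
  rw [P.ltQ_iff_ltFrac (a := a + c) (b := b + d) hn (by push_cast; ring)]
  exact P.ltFrac_add hx hy

lemma lt_of_qLt_of_ltQ {q q' : ℚ} {x : X} (h₁ : P.qLt q x) (h₂ : P.ltQ x q') : q < q' := by
  obtain ⟨a, b, c, d, n, hn, rfl, rfl⟩ := Rat.exists_eq_sub_div_sub_div q q'
  rw [P.qLt_iff_fracLt hn rfl] at h₁
  rw [P.ltQ_iff_ltFrac hn rfl] at h₂
  rw [div_lt_div_iff_of_pos_right (by positivity), sub_lt_sub_iff]
  exact_mod_cast P.lt_of_fracLt_of_ltFrac h₁ h₂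

lemma qLt_or_ltQ {q q' : ℚ} (h : q < q') (x : X) : P.qLt q x ∨ P.ltQ x q' := by
  obtain ⟨a, b, c, d, n, hn, rfl, rfl⟩ := Rat.exists_eq_sub_div_sub_div q q'
  rw [div_lt_div_iff_of_pos_right (by positivity), sub_lt_sub_iff] at h
  rw [P.qLt_iff_fracLt hn rfl, P.ltQ_iff_ltFrac hn rfl]
  exact P.fracLt_or_ltFrac (by exact_mod_cast h) x

lemma qLt_of_qLt_of_lt {q : ℚ} {x y : X} (hq : P.qLt q x) (hxy : P.lt x y) : P.qLt q y :=
  P.lt_trans hq ((P.add_lt_add_iff _ _ _).2 (P.nsmul_lt_nsmul hxy q.den_pos))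

lemma qLt_one_iff {q : ℚ} : P.qLt q P.one ↔ q < 1 := by
  rw [qLt, P.nsmul_one, ← P.ofNat_add, P.ofNat_lt_ofNat_iff, ← Rat.cast_lt (K := ℝ),
    Rat.cast_eq_toNat_sub_div q, Rat.cast_one, div_lt_one (by positivity), sub_lt_iff_lt_add]
  norm_cast

lemma one_lt_iff_ltQ {q : ℚ} : P.ltQ P.one q ↔ 1 < q := by
  rw [ltQ, P.nsmul_one, ← P.ofNat_add, P.ofNat_lt_ofNat_iff, ← Rat.cast_lt (K := ℝ),
    Rat.cast_eq_toNat_sub_div q, Rat.cast_one, one_lt_div (by positivity), lt_sub_iff_add_lt]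
  norm_cast

lemma exists_qLt (hA : P.Archimedean) (x : X) : ∃ q : ℚ, P.qLt q x := by
  obtain ⟨k, hk⟩ := hA P.zero P.zero x P.one P.zero_lt_one
  rw [P.nsmul_zero, P.add_zero] at hk
  refine ⟨-k, (P.qLt_iff_fracLt (a := 0) (b := k) one_pos (by simp)).2 ?_⟩
  rw [fracLt, P.one_nsmul]
  exact hk

lemma exists_ltQ (hA : P.Archimedean) (x : X) : ∃ q : ℚ, P.ltQ x q := by
  obtain ⟨k, hk⟩ := hA x P.zero P.zero P.one P.zero_lt_one
  rw [P.nsmul_zero, P.add_zero, P.zero_add] at hk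
  refine ⟨k, (P.ltQ_iff_ltFrac (a := k) (b := 0) one_pos (by simp)).2 ?_⟩
  rw [ltFrac, P.one_nsmul, P.ofNat_zero, P.add_zero]
  exact hk

noncomputable def toReal (x : X) : ℝ := sSup (((↑) : ℚ → ℝ) '' {q | P.qLt q x})

section

variable {P} (hA : P.Archimedean)
include hA

lemma toReal_le_iff {x : X} {r : ℝ} : P.toReal x ≤ r ↔ ∀ q : ℚ, P.qLt q x → (q : ℝ) ≤ r := by
  obtain ⟨q₀, h₀⟩ := P.exists_qLt hA x
  obtain ⟨q₁, h₁⟩ := P.exists_ltQ hA x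
  have hbdd : BddAbove (((↑) : ℚ → ℝ) '' {q | P.qLt q x}) := by
    refine ⟨q₁, ?_⟩
    rintro _ ⟨q, hq, rfl⟩
    exact_mod_cast (P.lt_of_qLt_of_ltQ hq h₁).le
  rw [toReal, csSup_le_iff hbdd ⟨q₀, q₀, h₀, rfl⟩, Set.forall_mem_image]
  rfl

lemma le_toReal_of_qLt {q : ℚ} {x : X} (hq : P.qLt q x) : (q : ℝ) ≤ P.toReal x :=
  (toReal_le_iff hA).1 le_rfl q hq

lemma le_toReal_iff {x : X} {r : ℝ} : r ≤ P.toReal x ↔ ∀ q : ℚ, P.ltQ x q → r ≤ q := by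
  refine ⟨fun h q hq => h.trans ((toReal_le_iff hA).2 fun q' hq' => ?_), fun h => ?_⟩
  · exact_mod_cast (P.lt_of_qLt_of_ltQ hq' hq).le
  by_contra! hlt
  obtain ⟨q, hxq, hq⟩ := exists_rat_btwn hlt
  obtain ⟨q', hqq', hq'r⟩ := exists_rat_btwn hq
  rcases P.qLt_or_ltQ (by exact_mod_cast hqq') x with hq | hq'
  · exact (le_toReal_of_qLt hA hq).not_gt hxq
  · exact (h q' hq').not_gt hq'r

lemma toReal_le_of_ltQ {q : ℚ} {x : X} (hq : P.ltQ x q) : P.toReal x ≤ q :=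
  (le_toReal_iff hA).1 le_rfl q hq

lemma toReal_eq_of_forall {x : X} {r : ℝ} (h₁ : ∀ q : ℚ, P.qLt q x → (q : ℝ) < r)
    (h₂ : ∀ q : ℚ, P.ltQ x q → r < q) : P.toReal x = r :=
  le_antisymm ((toReal_le_iff hA).2 fun q hq => (h₁ q hq).le)
    ((le_toReal_iff hA).2 fun q hq => (h₂ q hq).le)

lemma toReal_add (x y : X) : P.toReal (P.add x y) = P.toReal x + P.toReal y := by
  apply le_antisymm
  · rw [← sub_le_iff_le_add, le_toReal_iff hA]
    intro q hq
    rw [sub_le_comm, le_toReal_iff hA]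
    intro q' hq'
    have := toReal_le_of_ltQ hA (P.ltQ_add hq hq')
    push_cast at this
    linarith
  · rw [← le_sub_iff_add_le, toReal_le_iff hA]
    intro q hq
    rw [le_sub_comm, toReal_le_iff hA]
    intro q' hq'
    have := le_toReal_of_qLt hA (P.qLt_add hq hq')
    push_cast at this
    linarith

lemma toReal_zero : P.toReal P.zero = 0 := by
  have h := toReal_add hA P.zero P.zero
  rw [P.add_zero] at h
  linarith

lemma toReal_nsmul (n : ℕ) (x : X) : P.toReal (P.nsmul n x) = n * P.toReal x := by
  induction n with
  | zero => simpa [nsmul] using toReal_zero hA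
  | succ n ih =>
    rw [P.nsmul_succ, toReal_add hA, ih]
    push_cast
    ring

lemma toReal_one : P.toReal P.one = 1 :=
  toReal_eq_of_forall hA (fun _ hq => by exact_mod_cast P.qLt_one_iff.1 hq)
    fun _ hq => by exact_mod_cast P.one_lt_iff_ltQ.1 hq

lemma toReal_le_toReal {x y : X} (h : P.lt x y) : P.toReal x ≤ P.toReal y :=
  (toReal_le_iff hA).2 fun _ hq => le_toReal_of_qLt hA (P.qLt_of_qLt_of_lt hq h)

lemma toReal_lt_toReal {x y : X} (h : P.lt x y) : P.toReal x < P.toReal y := by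
  obtain ⟨n, hn⟩ := hA P.one x P.zero y h
  have := toReal_le_toReal hA hn
  rw [toReal_add hA, toReal_add hA, toReal_nsmul hA, toReal_nsmul hA, toReal_one hA,
    toReal_zero hA] at this
  by_contra! hyx
  nlinarith [mul_le_mul_of_nonneg_left hyx (Nat.cast_nonneg (α := ℝ) n)]

lemma toReal_pos {x : X} (hx : P.lt P.zero x) : 0 < P.toReal x :=
  toReal_zero hA ▸ toReal_lt_toReal hA hx

lemma mul_toReal_le_toReal_mul {x y : X} (hx : P.lt P.zero x) (hy : P.lt P.zero y) {q : ℚ}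
    (hq : P.qLt q x) : q * P.toReal y ≤ P.toReal (P.mul x y) := by
  rcases le_or_gt q 0 with hq0 | hq0
  · exact (mul_nonpos_of_nonpos_of_nonneg (by exact_mod_cast hq0) (toReal_pos hA hy).le).trans
      (toReal_pos hA (P.mul_pos x y hx hy)).le
  obtain ⟨a, n, ha, hn, rfl⟩ := Rat.exists_eq_div_of_pos hq0
  rw [P.qLt_iff_fracLt (a := a) (b := 0) hn (by simp), fracLt, P.ofNat_zero, P.add_zero] at hq
  have := toReal_le_toReal hA (P.nsmul_lt_nsmul_mul hx hy ha hn hq)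
  rw [toReal_nsmul hA, toReal_nsmul hA] at this
  push_cast
  rw [div_mul_eq_mul_div, div_le_iff₀ (by exact_mod_cast hn)]
  linarith

lemma toReal_mul_le_mul_toReal {x y : X} (hx : P.lt P.zero x) (hy : P.lt P.zero y) {q : ℚ}
    (hq : P.ltQ x q) : P.toReal (P.mul x y) ≤ q * P.toReal y := by
  have hq0 : (0 : ℚ) < q := by
    exact_mod_cast (toReal_pos hA hx).trans_le (toReal_le_of_ltQ hA hq)
  obtain ⟨a, n, ha, hn, rfl⟩ := Rat.exists_eq_div_of_pos hq0
  rw [P.ltQ_iff_ltFrac (a := a) (b := 0) hn (by simp), ltFrac, P.ofNat_zero, P.add_zero] at hq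
  have := toReal_le_toReal hA (P.nsmul_mul_lt_nsmul hx hy ha hn hq)
  rw [toReal_nsmul hA, toReal_nsmul hA] at this
  push_cast
  rw [div_mul_eq_mul_div, le_div_iff₀ (by exact_mod_cast hn)]
  linarith

lemma toReal_mul {x y : X} (hx : P.lt P.zero x) (hy : P.lt P.zero y) :
    P.toReal (P.mul x y) = P.toReal x * P.toReal y := by
  have hy' := toReal_pos hA hy
  apply le_antisymm
  · rw [← div_le_iff₀ hy', le_toReal_iff hA]
    exact fun q hq => (div_le_iff₀ hy').2 (toReal_mul_le_mul_toReal hA hx hy hq)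
  · rw [← le_div_iff₀ hy', toReal_le_iff hA]
    exact fun q hq => (le_div_iff₀ hy').2 (mul_toReal_le_toReal_mul hA hx hy hq)

lemma isHom_toReal : P.IsHom realPrestreak P.toReal :=
  ⟨fun _ _ => toReal_lt_toReal hA, toReal_add hA, toReal_zero hA, toReal_one hA,
    fun _ _ => toReal_mul hA⟩

end

namespace IsHom

variable {P} {f : X → ℝ} (hf : P.IsHom realPrestreak f)
include hf

lemma map_lt {a b : X} (h : P.lt a b) : f a < f b := hf.1 a b h

lemma map_add (a b : X) : f (P.add a b) = f a + f b := hf.2.1 a b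

lemma map_nsmul (n : ℕ) (x : X) : f (P.nsmul n x) = n * f x := by
  induction n with
  | zero =>
    rw [Nat.cast_zero, zero_mul]
    exact hf.2.2.1
  | succ n ih =>
    rw [P.nsmul_succ, hf.map_add, ih]
    push_cast
    ring

lemma map_ofNat (n : ℕ) : f (P.ofNat n) = n := by
  rw [← P.nsmul_one, hf.map_nsmul, hf.2.2.2.1]
  exact _root_.mul_one _

lemma rat_lt_of_qLt {q : ℚ} {x : X} (hq : P.qLt q x) : (q : ℝ) < f x := by
  have h := hf.map_lt hq
  rw [hf.map_add, hf.map_nsmul, hf.map_ofNat, hf.map_ofNat] at h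
  rw [Rat.cast_eq_toNat_sub_div, div_lt_iff₀ (by exact_mod_cast q.den_pos)]
  linarith

lemma lt_rat_of_ltQ {q : ℚ} {x : X} (hq : P.ltQ x q) : f x < q := by
  have h := hf.map_lt hq
  rw [hf.map_add, hf.map_nsmul, hf.map_ofNat, hf.map_ofNat] at h
  rw [Rat.cast_eq_toNat_sub_div, lt_div_iff₀ (by exact_mod_cast q.den_pos)]
  linarith

lemma eq_toReal (hA : P.Archimedean) (x : X) : f x = P.toReal x :=
  (P.toReal_eq_of_forall hA (fun _ => hf.rat_lt_of_qLt) fun _ => hf.lt_rat_of_ltQ).symm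

end IsHom

end Prestreak

lemma realPrestreak_nsmul (n : ℕ) (x : ℝ) : realPrestreak.nsmul n x = n * x := by
  induction n with
  | zero => simp [Prestreak.nsmul, realPrestreak]
  | succ n ih =>
    rw [Prestreak.nsmul_succ, ih]
    change _ + _ = _
    push_cast
    ring

lemma realPrestreak_archimedean : realPrestreak.Archimedean := by
  intro a b c d (hbd : b < d)
  obtain ⟨n, hn⟩ := exists_nat_gt ((a - c) / (d - b))
  refine ⟨n, ?_⟩
  change a + _ < c + _
  rw [realPrestreak_nsmul, realPrestreak_nsmul]
  rw [div_lt_iff₀ (sub_pos.2 hbd)] at hn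
  linarith

lemma realPrestreak_tight : realPrestreak.Tight :=
  fun _ _ h₁ h₂ => le_antisymm (not_lt.1 h₂) (not_lt.1 h₁)

/-- `ℝ` is a streak (a tight archimedean prestreak) and is the terminal
streak: every streak admits exactly one prestreak morphism into `ℝ`. -/
theorem real_terminal_streak :
    realPrestreak.Archimedean ∧ realPrestreak.Tight ∧
      ∀ {X : Type u} (P : Prestreak X), P.Archimedean → P.Tight →
        ∃! f : X → ℝ, P.IsHom realPrestreak f := by
  refine ⟨realPrestreak_archimedean, realPrestreak_tight, fun P hA _ => ?_⟩
  exact ⟨P.toReal, P.isHom_toReal hA, fun f hf => funext (hf.eq_toReal hA)⟩
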